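/- arXiv:1602.05151 — 4 statements merged into one kernel-verified Lean document; each statement's English description precedes it below -/
import Mathlib

section
/- In any labelled transition system, branching bisimilarity ~ is an equivalence relation on the set of states (reflexive, symmetric and transitive). -/
/-! Common definitions: labelled transition systems, branching bisimulation,
branching bisimilarity, silent states, class-change norm, BPA systems,
right-to-left finite transducers. -/

/-- A τ-path `t = t₀ →τ t₁ →τ ⋯ →τ t_k` in which every state after `t₀`
is related to `s` by `B`. -/
inductive TauSeq {S Act : Type} (tr : S → Act → S → Prop) (τ : Act)
    (B : S → S → Prop) (s : S) : S → S → Prop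
  | refl (t : S) : TauSeq tr τ B s t t
  | step {t t' t'' : S} : tr t τ t' → B s t' → TauSeq tr τ B s t' t'' →
      TauSeq tr τ B s t t''

/-- `B` is a branching bisimulation in the LTS given by `tr` with silent action `τ`. -/
def IsBranchingBisim {S Act : Type} (tr : S → Act → S → Prop) (τ : Act)
    (B : S → S → Prop) : Prop :=
  ∀ s t, B s t →
    (∀ a s', tr s a s' →
      ((a = τ ∧ B s' t) ∨
        ∃ tk t', TauSeq tr τ B s t tk ∧ tr tk a t' ∧ B s' t')) ∧
    (∀ a t', tr t a t' →
      ((a = τ ∧ B s t') ∨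
        ∃ sk s', TauSeq tr τ (fun u v => B v u) t s sk ∧ tr sk a s' ∧ B s' t'))

/-- Branching bisimilarity: `s ~ t` iff some branching bisimulation contains `(s,t)`. -/
def BBisim {S Act : Type} (tr : S → Act → S → Prop) (τ : Act) (s t : S) : Prop :=
  ∃ B, IsBranchingBisim tr τ B ∧ B s t

/-- `Steps tr s w t`: there is a path from `s` to `t` labelled by the word `w`. -/
inductive Steps {S Act : Type} (tr : S → Act → S → Prop) : S → List Act → S → Prop
  | refl (s : S) : Steps tr s [] s
  | step {s : S} {a : Act} {s' : S} {w : List Act} {t : S} :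
      tr s a s' → Steps tr s' w t → Steps tr s (a :: w) t

/-- A state is silent if only τ-labelled words can be performed from it. -/
def SilentState {S Act : Type} (tr : S → Act → S → Prop) (τ : Act) (s : S) : Prop :=
  ∀ w s', Steps tr s w s' → ∀ a ∈ w, a = τ

/-- A τ-path in which no transition is class-changing (each step stays in the same
`~`-class). -/
inductive TauNC {S Act : Type} (tr : S → Act → S → Prop) (τ : Act) : S → S → Prop
  | refl (t : S) : TauNC tr τ t t
  | step {t t' t'' : S} : tr t τ t' → BBisim tr τ t t' → TauNC tr τ t' t'' →
      TauNC tr τ t t''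

/-- `CCPath tr τ s n t`: there is a path from `s` to `t` containing exactly `n`
class-changing transitions. -/
inductive CCPath {S Act : Type} (tr : S → Act → S → Prop) (τ : Act) : S → ℕ → S → Prop
  | refl (s : S) : CCPath tr τ s 0 s
  | stepEq {s : S} {a : Act} {s' : S} {n : ℕ} {t : S} :
      tr s a s' → BBisim tr τ s s' → CCPath tr τ s' n t → CCPath tr τ s n t
  | stepNe {s : S} {a : Act} {s' : S} {n : ℕ} {t : S} :
      tr s a s' → ¬ BBisim tr τ s s' → CCPath tr τ s' n t → CCPath tr τ s (n + 1) t

/-- The class-change norm: the least number of class-changing transitions on a path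
to a silent state; `⊤` (ω) if no silent state is reachable. -/
noncomputable def ccNorm {S Act : Type} (tr : S → Act → S → Prop) (τ : Act) (s : S) : ℕ∞ :=
  sInf {n : ℕ∞ | ∃ ℓ : ℕ, n = (ℓ : ℕ∞) ∧ ∃ t, CCPath tr τ s ℓ t ∧ SilentState tr τ t}

/-- A BPA system: a finite set of rules `A →a α` (a context-free grammar in
Greibach normal form, no starting variable). -/
structure BPA (V Act : Type) where
  rules : Finset (V × Act × List V)

/-- The transition relation of the LTS `L_G` associated with a BPA system `G`:
`Aβ →a γβ` whenever `A →a γ` is a rule. -/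
def BPA.tr {V Act : Type} (G : BPA V Act) : List V → Act → List V → Prop :=
  fun s a t => ∃ (A : V) (γ β : List V), (A, a, γ) ∈ G.rules ∧ s = A :: β ∧ t = γ ++ β

/-- The (standard, syntactic) norm of a process: the length of a shortest word
leading to the empty process; `⊤` (ω) if there is none. -/
noncomputable def BPA.norm {V Act : Type} (G : BPA V Act) (α : List V) : ℕ∞ :=
  sInf {n : ℕ∞ | ∃ w : List Act, n = (w.length : ℕ∞) ∧ Steps G.tr α w []}

/-- A BPA system is normed if every variable has a finite norm. -/
def BPA.Normed {V Act : Type} (G : BPA V Act) : Prop :=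
  ∀ A : V, G.norm [A] ≠ ⊤

/-- The transition relation of `L_{G,R}`: as `L_G`, but all outgoing transitions of
states in `R*` are removed. -/
def BPA.trR {V Act : Type} (G : BPA V Act) (R : Set V) : List V → Act → List V → Prop :=
  fun s a t => G.tr s a t ∧ ¬ (∀ X ∈ s, X ∈ R)

/-- `R_γ`: the set of variables redundant w.r.t. `γ`, i.e. those `X` with `Xγ ~ γ`. -/
def RedSet {V Act : Type} (G : BPA V Act) (τ : Act) (γ : List V) : Set V :=
  {X : V | BBisim G.tr τ (X :: γ) γ}

/-- `α` is a redundancy-free prefix of `αγ`: it cannot be written as `δXβ` with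
`Xβγ ~ βγ`. -/
def RedFreePrefix {V Act : Type} (G : BPA V Act) (τ : Act) (α γ : List V) : Prop :=
  ¬ ∃ (δ : List V) (X : V) (β : List V),
      α = δ ++ X :: β ∧ BBisim G.tr τ (X :: (β ++ γ)) (β ++ γ)

/-- A finite-state transducer reading (and writing) from right to left. -/
structure Transducer (Q V : Type) where
  delta : Q → V → Q × List V
  q0 : Q

/-- Running the transducer on an input string, right to left:
`T.run α q = (q', β)` means `q' ⇐α|β= q`. -/
def Transducer.run {Q V : Type} (T : Transducer Q V) : List V → Q → Q × List V
  | [], q => (q, [])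
  | A :: α, q =>
      let p := T.run α q
      ((T.delta p.1 A).1, (T.delta p.1 A).2 ++ p.2)

/-- `T_q(α)`: the output of `T` on input `α`, started in state `q`. -/
def Transducer.out {Q V : Type} (T : Transducer Q V) (q : Q) (α : List V) : List V :=
  (T.run α q).2

/-- `q`-normal forms: `ε ∈ NF_q`, and `αA ∈ NF_q` iff `A` is a `q`-prime and
`α` is a `q'`-normal form where `q' ⇐A|A= q`. -/
inductive Transducer.NF {Q V : Type} (T : Transducer Q V) : Q → List V → Prop
  | nil (q : Q) : Transducer.NF T q []
  | snoc {q : Q} {A : V} {α : List V} :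
      (T.delta q A).2 = [A] → Transducer.NF T (T.delta q A).1 α →
      Transducer.NF T q (α ++ [A])

/-- A normal-form-computing (nfc) transducer: each `T_q(A)` is a `q`-normal form,
and `q' ⇐A|γ= q` implies `q' ⇐γ|γ= q`. -/
def Transducer.IsNFC {Q V : Type} (T : Transducer Q V) : Prop :=
  ∀ (q : Q) (A : V),
    Transducer.NF T q (T.delta q A).2 ∧ T.run (T.delta q A).2 q = T.delta q A

/-- A τ-path in `L_G` along which the `T_q`-output stays constant. -/
inductive ConstTauSeq {Q V Act : Type} (tr : List V → Act → List V → Prop) (τ : Act)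
    (T : Transducer Q V) (q : Q) : List V → List V → Prop
  | refl (α : List V) : ConstTauSeq tr τ T q α α
  | step {α α' α'' : List V} : tr α τ α' → T.out q α' = T.out q α →
      ConstTauSeq tr τ T q α' α'' → ConstTauSeq tr τ T q α α''

/-- The long move `α ⇒a_q β`. -/
def BigStep {Q V Act : Type} (G : BPA V Act) (τ : Act) (T : Transducer Q V) (q : Q)
    (α : List V) (a : Act) (β : List V) : Prop :=
  (a = τ ∧ β = T.out q α) ∨
  ∃ αk β', ConstTauSeq G.tr τ T q α αk ∧ G.tr αk a β' ∧ β = T.out q β'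

/-- The equivalence `α₁ ≈_q α₂`: the same long moves are available. -/
def TApprox {Q V Act : Type} (G : BPA V Act) (τ : Act) (T : Transducer Q V) (q : Q)
    (α₁ α₂ : List V) : Prop :=
  ∀ a β, BigStep G τ T q α₁ a β ↔ BigStep G τ T q α₂ a β

/-- Consistency of an nfc-transducer with a BPA system (Definition 4.1). -/
def ConsistentWith {Q V Act : Type} (T : Transducer Q V) (G : BPA V Act) (τ : Act) : Prop :=
  (∀ A : V, T.out T.q0 [A] = [] → TApprox G τ T T.q0 [A] []) ∧
  (∀ (q : Q) (A : V), T.out q [A] ≠ [] → TApprox G τ T q [A] (T.out q [A])) ∧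
  (∀ (q : Q) (A C : V), T.out q [A, C] = [C] → T.out q [C] = [C] →
    TApprox G τ T q [A, C] [C])

section BBisimEquiv

variable {S Act : Type} {tr : S → Act → S → Prop} {τ : Act}

lemma tauSeq_mono {B B' : S → S → Prop} {s s' u v : S}
    (h : ∀ y, B s y → B' s' y) :
    TauSeq tr τ B s u v → TauSeq tr τ B' s' u v := by
  intro hp
  induction hp with
  | refl t => exact TauSeq.refl t
  | step htr hB _ ih => exact TauSeq.step htr (h _ hB) ih

lemma tauSeq_append {B : S → S → Prop} {s u v w : S}
    (h1 : TauSeq tr τ B s u v) (h2 : TauSeq tr τ B s v w) :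
    TauSeq tr τ B s u w := by
  induction h1 with
  | refl t => exact h2
  | step htr hB _ ih => exact TauSeq.step htr hB (ih h2)

lemma tauSeq_endRel {B : S → S → Prop} {s u v : S}
    (h : TauSeq tr τ B s u v) (hB : B s u) : B s v := by
  induction h with
  | refl t => exact hB
  | step _ hB' _ ih => exact ih hB'

lemma tauSeq_last {B : S → S → Prop} {s u v : S}
    (h : TauSeq tr τ B s u v) :
    v = u ∨ ∃ p, TauSeq tr τ B s u p ∧ tr p τ v ∧ B s v := by
  induction h with
  | refl t => exact Or.inl rfl
  | @step t t' t'' htr hB rest ih =>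
    rcases ih with rfl | ⟨p, hp, hptr, hpB⟩
    · exact Or.inr ⟨t, TauSeq.refl t, htr, hB⟩
    · exact Or.inr ⟨p, TauSeq.step htr hB hp, hptr, hpB⟩

lemma isBisim_flip {B : S → S → Prop} (hB : IsBranchingBisim tr τ B) :
    IsBranchingBisim tr τ (fun x y => B y x) := by
  intro s t hst
  obtain ⟨h1, h2⟩ := hB t s hst
  constructor
  · intro a s' htr
    rcases h2 a s' htr with ⟨ha, hb⟩ | ⟨sk, s'', hp, htr', hb⟩
    · exact Or.inl ⟨ha, hb⟩
    · exact Or.inr ⟨sk, s'', hp, htr', hb⟩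
  · intro a t' htr
    rcases h1 a t' htr with ⟨ha, hb⟩ | ⟨tk, t'', hp, htr', hb⟩
    · exact Or.inl ⟨ha, hb⟩
    · exact Or.inr ⟨tk, t'', hp, htr', hb⟩

lemma bbisim_symm {s t : S} (h : BBisim tr τ s t) : BBisim tr τ t s := by
  obtain ⟨B, hB, hst⟩ := h
  exact ⟨fun x y => B y x, isBisim_flip hB, hst⟩

lemma bbisim_isBisim : IsBranchingBisim tr τ (BBisim tr τ) := by
  intro s t hst
  obtain ⟨B, hB, hB0⟩ := hst
  obtain ⟨h1, h2⟩ := hB s t hB0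
  constructor
  · intro a s' htr
    rcases h1 a s' htr with ⟨ha, hb⟩ | ⟨tk, t', hp, htr', hb⟩
    · exact Or.inl ⟨ha, ⟨B, hB, hb⟩⟩
    · exact Or.inr ⟨tk, t', tauSeq_mono (fun y hy => ⟨B, hB, hy⟩) hp, htr', ⟨B, hB, hb⟩⟩
  · intro a t' htr
    rcases h2 a t' htr with ⟨ha, hb⟩ | ⟨sk, s', hp, htr', hb⟩
    · exact Or.inl ⟨ha, ⟨B, hB, hb⟩⟩
    · exact Or.inr ⟨sk, s',
        tauSeq_mono (B := fun u v => B v u) (B' := fun u v => BBisim tr τ v u)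
          (fun y hy => ⟨B, hB, hy⟩) hp, htr',
        ⟨B, hB, hb⟩⟩

/-- Composition of branching bisimilarity with itself. -/
def BComp (tr : S → Act → S → Prop) (τ : Act) (s u : S) : Prop :=
  ∃ t, BBisim tr τ s t ∧ BBisim tr τ t u

lemma bcomp_symm {s u : S} (h : BComp tr τ s u) : BComp tr τ u s := by
  obtain ⟨t, h1, h2⟩ := h
  exact ⟨t, bbisim_symm h2, bbisim_symm h1⟩

/-- Matching a τ-path on the `t`-side against `u`. -/
lemma match_tauSeq {s t u tk : S}
    (hpath : TauSeq tr τ (BBisim tr τ) s t tk)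
    (hst : BBisim tr τ s t) (htu : BBisim tr τ t u) :
    ∃ um, TauSeq tr τ (BComp tr τ) s u um ∧ BBisim tr τ tk um := by
  induction hpath generalizing u with
  | refl t => exact ⟨u, TauSeq.refl u, htu⟩
  | @step t t₁ tk htr hs1 rest ih =>
    rcases (bbisim_isBisim t u htu).1 τ t₁ htr with ⟨_, ht1u⟩ |
        ⟨uk, u₁, hp, htr', ht1u1⟩
    · exact ih hs1 ht1u
    · obtain ⟨um, hupath, htkum⟩ := ih hs1 ht1u1
      refine ⟨um, tauSeq_append
        (tauSeq_mono (fun y hy => ⟨t, hst, hy⟩) hp)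
        (TauSeq.step htr' ⟨t₁, hs1, ht1u1⟩ hupath), htkum⟩

lemma bcomp_forward {s u : S} (hsu : BComp tr τ s u) :
    ∀ a s', tr s a s' →
      ((a = τ ∧ BComp tr τ s' u) ∨
        ∃ uk u', TauSeq tr τ (BComp tr τ) s u uk ∧ tr uk a u' ∧
          BComp tr τ s' u') := by
  obtain ⟨t, hst, htu⟩ := hsu
  intro a s' htr
  rcases (bbisim_isBisim s t hst).1 a s' htr with ⟨ha, hs't⟩ |
      ⟨tk, t', hpath, htk, hs't'⟩
  · exact Or.inl ⟨ha, ⟨t, hs't, htu⟩⟩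
  · obtain ⟨um, hupath, htkum⟩ := match_tauSeq hpath hst htu
    rcases (bbisim_isBisim tk um htkum).1 a t' htk with ⟨ha, ht'um⟩ |
        ⟨uk, u', hp2, htr', ht'u'⟩
    · rcases tauSeq_last hupath with rfl | ⟨p, ppath, ptr, _⟩
      · exact Or.inl ⟨ha, ⟨t', hs't', ht'um⟩⟩
      · exact Or.inr ⟨p, um, ppath, ha ▸ ptr, ⟨t', hs't', ht'um⟩⟩
    · have hstk : BBisim tr τ s tk := tauSeq_endRel hpath hst
      exact Or.inr ⟨uk, u',
        tauSeq_append hupath (tauSeq_mono (fun y hy => ⟨tk, hstk, hy⟩) hp2),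
        htr', ⟨t', hs't', ht'u'⟩⟩

lemma bcomp_isBisim : IsBranchingBisim tr τ (BComp tr τ) := by
  intro s u hsu
  constructor
  · exact bcomp_forward hsu
  · intro a u' htr
    rcases bcomp_forward (bcomp_symm hsu) a u' htr with ⟨ha, hb⟩ |
        ⟨sk, s', hp, htr', hb⟩
    · exact Or.inl ⟨ha, bcomp_symm hb⟩
    · exact Or.inr ⟨sk, s',
        tauSeq_mono (fun y hy => bcomp_symm hy) hp, htr', bcomp_symm hb⟩

end BBisimEquiv

/-- Branching bisimilarity is an equivalence relation. -/
theorem bbisim_equivalence {S Act : Type} (tr : S → Act → S → Prop) (τ : Act) :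
    Equivalence (BBisim tr τ) := by
  refine ⟨?_, ?_, ?_⟩
  · intro s
    refine ⟨Eq, ?_, rfl⟩
    intro x y hxy
    subst hxy
    exact ⟨fun a s' htr => Or.inr ⟨x, s', TauSeq.refl x, htr, rfl⟩,
           fun a t' htr => Or.inr ⟨x, t', TauSeq.refl x, htr, rfl⟩⟩
  · exact fun h => bbisim_symm h
  · intro s t u hst htu
    exact ⟨BComp tr τ, bcomp_isBisim, ⟨t, hst, htu⟩⟩
end

section
/- Let T = (Q, V, Δ, q₀) be an nfc-transducer. Then for all q ∈ Q, A ∈ V and α, β ∈ V*: (a) if α ∈ NF_q then T_q(α) = α; (b) T_q(T_q(α)) = T_q(α); (c) T_q(αβ) = T_q(α · T_q(β)); (d) if Δ(q,A) = (q', ε) then q' = q. -/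
lemma Transducer.run_append {Q V : Type} (T : Transducer Q V) (α β : List V) (q : Q) :
    T.run (α ++ β) q =
      ((T.run α (T.run β q).1).1, (T.run α (T.run β q).1).2 ++ (T.run β q).2) := by
  induction α with
  | nil => simp [Transducer.run]
  | cons A α ih => simp [Transducer.run, ih]

lemma Transducer.run_fix {Q V : Type} (T : Transducer Q V) (hT : T.IsNFC)
    (α : List V) (q : Q) : T.run (T.run α q).2 q = T.run α q := by
  induction α with
  | nil => simp [Transducer.run]
  | cons A α ih =>
    simp only [Transducer.run]
    rw [Transducer.run_append, ih, (hT (T.run α q).1 A).2]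

lemma Transducer.run_nf {Q V : Type} (T : Transducer Q V) {q : Q} {α : List V}
    (h : T.NF q α) : (T.run α q).2 = α := by
  induction h with
  | nil => simp [Transducer.run]
  | @snoc q A α h1 h2 ih =>
    rw [Transducer.run_append]
    have : T.run [A] q = ((T.delta q A).1, [A]) := by
      simp [Transducer.run, h1]
    rw [this]
    simp [ih]

/-- basic properties of nfc-transducers: (a) normal forms are fixed
points of `T_q`; (b) idempotency `T_q(T_q(α)) = T_q(α)`;
(c) `T_q(αβ) = T_q(α · T_q(β))`; (d) if `Δ(q,A) = (q', ε)` then `q' = q`. -/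
theorem nfc_transducer_properties {Q V : Type} (T : Transducer Q V)
    (hT : T.IsNFC) :
    (∀ (q : Q) (α : List V), T.NF q α → T.out q α = α) ∧
    (∀ (q : Q) (α : List V), T.out q (T.out q α) = T.out q α) ∧
    (∀ (q : Q) (α β : List V), T.out q (α ++ β) = T.out q (α ++ T.out q β)) ∧
    (∀ (q q' : Q) (A : V), T.delta q A = (q', []) → q' = q) := by
  refine ⟨fun q α h => Transducer.run_nf T h,
    fun q α => ?_, fun q α β => ?_, fun q q' A h => ?_⟩
  · simp only [Transducer.out]
    rw [Transducer.run_fix T hT]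
  · simp only [Transducer.out]
    rw [Transducer.run_append, Transducer.run_append, Transducer.run_fix T hT]
  · have := (hT q A).2
    rw [h] at this
    simpa [Transducer.run] using congrArg Prod.fst this.symm
end

section
/- (Lemma 4.2(2)) If an nfc-transducer T = (Q, V, Δ, q₀) is consistent with a BPA system G = (V, Act, R), then the equivalence ≡^T (defined by α ≡^T β iff T(α) = T(β)) is a branching bisimulation in the LTS L_G; consequently T(α) = T(β) implies α ~ β in L_G. -/
/-! Consistency lets one rewrite `α` one variable at a time, from the right, into `T(α)` without
leaving its `≈_{q₀}`-class: `≈_q` is a congruence for replacing the head of `γρ` (given equal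
nonempty outputs at the state reached on `ρ`) and for replacing the tail (given equal outputs and
equal reached states). Hence `T(α) = T(β)` gives `α ≈_{q₀} β`. A move `α →a α'` is a long move
`α ⇒a_{q₀} T(α')`, and its match from `β` is a branching-bisimulation match for `≡^T`, because
the τ-steps of a long move keep the `T`-output constant. -/

section BranchingBisim

variable {S Act : Type} {tr : S → Act → S → Prop} {τ : Act}

theorem TauSeq.mono {B₁ B₂ : S → S → Prop} {s t u : S} (h : TauSeq tr τ B₁ s t u)
    (himp : ∀ x, B₁ s x → B₂ s x) : TauSeq tr τ B₂ s t u := by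
  induction h with
  | refl => exact TauSeq.refl _
  | step htr hB _ ih => exact TauSeq.step htr (himp _ hB) ih

theorem isBranchingBisim_of_symm {B : S → S → Prop} (hsymm : ∀ s t, B s t → B t s)
    (hmatch : ∀ s t, B s t → ∀ a s', tr s a s' →
      (a = τ ∧ B s' t) ∨ ∃ tk t', TauSeq tr τ B s t tk ∧ tr tk a t' ∧ B s' t') :
    IsBranchingBisim tr τ B := by
  refine fun s t hst => ⟨hmatch s t hst, fun a t' htr => ?_⟩
  rcases hmatch t s (hsymm s t hst) a t' htr with ⟨ha, hB⟩ | ⟨sk, s', hseq, htr', hB⟩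
  · exact Or.inl ⟨ha, hsymm _ _ hB⟩
  · exact Or.inr ⟨sk, s', hseq.mono fun x => hsymm t x, htr', hsymm _ _ hB⟩

end BranchingBisim

namespace Transducer

variable {Q V : Type} {T : Transducer Q V}

theorem run_append_s9 (γ ρ : List V) (q : Q) :
    T.run (γ ++ ρ) q = ((T.run γ (T.run ρ q).1).1,
      (T.run γ (T.run ρ q).1).2 ++ (T.run ρ q).2) := by
  induction γ with
  | nil => simp [run]
  | cons A γ ih => simp [run, ih]

theorem out_append (γ ρ : List V) (q : Q) :
    T.out q (γ ++ ρ) = T.out (T.run ρ q).1 γ ++ T.out q ρ := by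
  rw [out, run_append_s9]; rfl

theorem run_append_fst (γ ρ : List V) (q : Q) :
    (T.run (γ ++ ρ) q).1 = (T.run γ (T.run ρ q).1).1 := by
  rw [run_append_s9]

theorem out_singleton (q : Q) (A : V) : T.out q [A] = (T.delta q A).2 := by
  simp [out, run]

theorem run_singleton_fst (q : Q) (A : V) : (T.run [A] q).1 = (T.delta q A).1 := rfl

theorem out_cons (q : Q) (A : V) (α : List V) :
    T.out q (A :: α) = T.out (T.run α q).1 [A] ++ T.out q α :=
  out_append [A] α q

theorem NF.append {q : Q} {β : List V} (hβ : T.NF q β) {γ : List V}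
    (hγ : T.NF (T.run β q).1 γ) : T.NF q (γ ++ β) := by
  induction hβ generalizing γ with
  | nil => simpa [run] using hγ
  | @snoc q A α hA _ ih =>
    rw [run_append_fst, run_singleton_fst] at hγ
    simpa using NF.snoc hA (ih hγ)

theorem NF.out_head {q : Q} {C : V} {ρ : List V} (h : T.NF q (C :: ρ)) :
    T.out (T.run ρ q).1 [C] = [C] := by
  generalize hCρ : C :: ρ = σ at h
  induction h generalizing ρ with
  | nil => cases hCρ
  | @snoc q A α hA _ ih =>
    rcases α with _ | ⟨D, α⟩
    · obtain ⟨rfl, rfl⟩ : A = C ∧ ρ = [] := by simpa using hCρ.symm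
      exact (out_singleton _ _).trans hA
    · obtain ⟨rfl, rfl⟩ : C = D ∧ ρ = α ++ [A] := by simpa using hCρ
      rw [run_append_fst, run_singleton_fst]
      exact ih rfl

theorem IsNFC.run_out (hnfc : T.IsNFC) (q : Q) (α : List V) :
    T.run (T.out q α) q = T.run α q := by
  induction α with
  | nil => rfl
  | cons A α ih =>
    rw [out_cons, out_singleton, run_append_s9, ih, (hnfc _ A).2]
    rfl

theorem IsNFC.out_out_singleton (hnfc : T.IsNFC) (q : Q) (A : V) :
    T.out q (T.out q [A]) = T.out q [A] := by
  rw [out_singleton, out, (hnfc q A).2]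

theorem IsNFC.nf_out (hnfc : T.IsNFC) (q : Q) (α : List V) : T.NF q (T.out q α) := by
  induction α with
  | nil => exact NF.nil q
  | cons A α ih =>
    rw [out_cons, out_singleton]
    exact ih.append (by rw [hnfc.run_out]; exact (hnfc _ A).1)

end Transducer

namespace BPA

variable {V Act : Type} {G : BPA V Act}

theorem tr_append {γ δ : List V} {a : Act} (h : G.tr γ a δ) (ρ : List V) :
    G.tr (γ ++ ρ) a (δ ++ ρ) := by
  obtain ⟨A, γ', β, hrule, rfl, rfl⟩ := h
  exact ⟨A, γ', β ++ ρ, hrule, rfl, by simp⟩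

theorem exists_of_tr_append {γ ρ β : List V} {a : Act} (h : G.tr (γ ++ ρ) a β)
    (hγ : γ ≠ []) : ∃ δ, G.tr γ a δ ∧ β = δ ++ ρ := by
  obtain ⟨A, γ', β', hrule, hsrc, rfl⟩ := h
  obtain ⟨X, γ₀, rfl⟩ := List.exists_cons_of_ne_nil hγ
  obtain ⟨rfl, rfl⟩ : X = A ∧ γ₀ ++ ρ = β' := by simpa using hsrc
  exact ⟨γ' ++ γ₀, ⟨X, γ', γ₀, hrule, rfl, rfl⟩, by simp⟩

end BPA

namespace ConstTauSeq

open Transducer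

variable {Q V Act : Type} {τ : Act} {T : Transducer Q V} {q : Q}

theorem out_eq {tr : List V → Act → List V → Prop} {s t : List V}
    (h : ConstTauSeq tr τ T q s t) : T.out q t = T.out q s := by
  induction h with
  | refl => rfl
  | step _ hout _ ih => exact ih.trans hout

theorem trans {tr : List V → Act → List V → Prop} {s t u : List V}
    (h₁ : ConstTauSeq tr τ T q s t) (h₂ : ConstTauSeq tr τ T q t u) :
    ConstTauSeq tr τ T q s u := by
  induction h₁ with
  | refl => exact h₂
  | step htr hout _ ih => exact step htr hout (ih h₂)

theorem tauSeq {tr : List V → Act → List V → Prop} {α β βk : List V}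
    (h : ConstTauSeq tr τ T q β βk) (hβα : T.out q β = T.out q α) :
    TauSeq tr τ (fun u v => T.out q u = T.out q v) α β βk := by
  induction h with
  | refl => exact TauSeq.refl _
  | step htr hout _ ih => exact TauSeq.step htr (hout.trans hβα).symm (ih (hout.trans hβα))

variable {G : BPA V Act}

theorem append_right {ρ γ δ : List V} (h : ConstTauSeq G.tr τ T (T.run ρ q).1 γ δ) :
    ConstTauSeq G.tr τ T q (γ ++ ρ) (δ ++ ρ) := by
  induction h with
  | refl => exact refl _
  | step htr hout _ ih =>
    exact step (BPA.tr_append htr ρ) (by rw [out_append, out_append, hout]) ih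

theorem split_append {ρ γ αk : List V} (h : ConstTauSeq G.tr τ T q (γ ++ ρ) αk) :
    (∃ δ, δ ≠ [] ∧ αk = δ ++ ρ ∧ ConstTauSeq G.tr τ T (T.run ρ q).1 γ δ) ∨
    (ConstTauSeq G.tr τ T (T.run ρ q).1 γ [] ∧ ConstTauSeq G.tr τ T q ρ αk) := by
  generalize hs : γ ++ ρ = s at h
  induction h generalizing γ with
  | refl =>
    subst hs
    rcases γ with _ | ⟨X, γ⟩
    · exact Or.inr ⟨refl _, refl _⟩
    · exact Or.inl ⟨X :: γ, List.cons_ne_nil _ _, rfl, refl _⟩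
  | step htr hout hrest ih =>
    subst hs
    rcases γ with _ | ⟨X, γ⟩
    · exact Or.inr ⟨refl _, step htr hout hrest⟩
    · obtain ⟨δ₁, htrγ, rfl⟩ := BPA.exists_of_tr_append htr (List.cons_ne_nil X γ)
      rw [out_append, out_append] at hout
      have hout' := List.append_cancel_right hout
      rcases ih rfl with ⟨δ, hδ, rfl, hseq⟩ | ⟨hseq, hρ⟩
      · exact Or.inl ⟨δ, hδ, rfl, step htrγ hout' hseq⟩
      · exact Or.inr ⟨step htrγ hout' hseq, hρ⟩

end ConstTauSeq

section LongMoves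

open Transducer

variable {Q V Act : Type} {G : BPA V Act} {τ : Act} {T : Transducer Q V} {q : Q}

theorem BigStep.append_right {ρ γ σ : List V} {a : Act}
    (h : BigStep G τ T (T.run ρ q).1 γ a σ) :
    BigStep G τ T q (γ ++ ρ) a (σ ++ T.out q ρ) := by
  rcases h with ⟨ha, rfl⟩ | ⟨δk, δ', hseq, htr, rfl⟩
  · exact Or.inl ⟨ha, by rw [out_append]⟩
  · exact Or.inr ⟨δk ++ ρ, δ' ++ ρ, hseq.append_right, BPA.tr_append htr ρ, by rw [out_append]⟩

theorem TApprox.refl (α : List V) : TApprox G τ T q α α := fun _ _ => Iff.rfl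

theorem TApprox.symm {α β : List V} (h : TApprox G τ T q α β) : TApprox G τ T q β α :=
  fun a γ => (h a γ).symm

theorem TApprox.trans {α β γ : List V} (h₁ : TApprox G τ T q α β)
    (h₂ : TApprox G τ T q β γ) : TApprox G τ T q α γ :=
  fun a δ => (h₁ a δ).trans (h₂ a δ)

theorem BigStep.append_right_of_tApprox {ρ γ₁ γ₂ : List V}
    (h : TApprox G τ T (T.run ρ q).1 γ₁ γ₂)
    (hout : T.out (T.run ρ q).1 γ₁ = T.out (T.run ρ q).1 γ₂)
    (hne : T.out (T.run ρ q).1 γ₁ ≠ []) {a : Act} {β : List V}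
    (hstep : BigStep G τ T q (γ₁ ++ ρ) a β) : BigStep G τ T q (γ₂ ++ ρ) a β := by
  rcases hstep with ⟨ha, rfl⟩ | ⟨αk, β', hseq, htr, rfl⟩
  · exact Or.inl ⟨ha, by rw [out_append, out_append, hout]⟩
  rcases hseq.split_append with ⟨δ, hδ, rfl, hhead⟩ | ⟨hnil, _⟩
  · obtain ⟨δ', htrδ, rfl⟩ := BPA.exists_of_tr_append htr hδ
    rw [out_append]
    exact ((h a _).1 (Or.inr ⟨δ, δ', hhead, htrδ, rfl⟩)).append_right
  · exact absurd hnil.out_eq.symm hne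

/-- The nonempty output keeps every constant-output τ-path from `γ₁ρ` inside the head. -/
theorem TApprox.append_right {ρ γ₁ γ₂ : List V}
    (h : TApprox G τ T (T.run ρ q).1 γ₁ γ₂)
    (hout : T.out (T.run ρ q).1 γ₁ = T.out (T.run ρ q).1 γ₂)
    (hne : T.out (T.run ρ q).1 γ₁ ≠ []) :
    TApprox G τ T q (γ₁ ++ ρ) (γ₂ ++ ρ) := fun _ _ =>
  ⟨BigStep.append_right_of_tApprox h hout hne,
    BigStep.append_right_of_tApprox h.symm hout.symm (hout ▸ hne)⟩

theorem BigStep.append_left_of_tApprox {α α' : List V} (γ : List V)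
    (h : TApprox G τ T q α α') (hout : T.out q α = T.out q α')
    (hst : (T.run α q).1 = (T.run α' q).1) {a : Act} {β : List V}
    (hstep : BigStep G τ T q (γ ++ α) a β) : BigStep G τ T q (γ ++ α') a β := by
  have hout_γ : ∀ σ, T.out q (σ ++ α) = T.out q (σ ++ α') := fun σ => by
    rw [out_append, out_append, hst, hout]
  rcases hstep with ⟨ha, rfl⟩ | ⟨αk, β', hseq, htr, rfl⟩
  · exact Or.inl ⟨ha, hout_γ γ⟩
  rcases hseq.split_append with ⟨δ, hδ, rfl, hhead⟩ | ⟨hnil, hrest⟩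
  · obtain ⟨δ', htrδ, rfl⟩ := BPA.exists_of_tr_append htr hδ
    exact Or.inr ⟨δ ++ α', δ' ++ α', (hst ▸ hhead).append_right, BPA.tr_append htrδ _, hout_γ δ'⟩
  · have hγ : T.out (T.run α q).1 γ = [] := hnil.out_eq.symm
    rcases (h a _).1 (Or.inr ⟨αk, β', hrest, htr, rfl⟩) with ⟨ha, hβ⟩ | ⟨αk', β'', hseq', htr', hβ⟩
    · exact Or.inl ⟨ha, by rw [hβ, out_append, ← hst, hγ, List.nil_append]⟩
    · have hγα' : ConstTauSeq G.tr τ T q (γ ++ α') α' := by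
        simpa using (hst ▸ hnil).append_right (ρ := α')
      exact Or.inr ⟨αk', β'', hγα'.trans hseq', htr', hβ⟩

theorem TApprox.append_left {α α' : List V} (γ : List V)
    (h : TApprox G τ T q α α') (hout : T.out q α = T.out q α')
    (hst : (T.run α q).1 = (T.run α' q).1) :
    TApprox G τ T q (γ ++ α) (γ ++ α') := fun _ _ =>
  ⟨BigStep.append_left_of_tApprox γ h hout hst,
    BigStep.append_left_of_tApprox γ h.symm hout.symm hst.symm⟩

end LongMoves

namespace ConsistentWith

open Transducer

variable {Q V Act : Type} {G : BPA V Act} {τ : Act} {T : Transducer Q V}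

theorem tApprox_cons_of_nf (hnfc : T.IsNFC) (hcons : ConsistentWith T G τ) (A : V)
    {ρ : List V} (hρ : T.NF T.q0 ρ) :
    TApprox G τ T T.q0 (A :: ρ) (T.out (T.run ρ T.q0).1 [A] ++ ρ) := by
  by_cases hA : T.out (T.run ρ T.q0).1 [A] = []
  · rw [hA, List.nil_append]
    rcases ρ with _ | ⟨C, ρ⟩
    · exact hcons.1 A hA
    · -- `C` is a `p`-prime since `ρ` is a normal form, and `A` is erased in front of it, so
      -- the third condition of consistency applies.
      set p := (T.run ρ T.q0).1
      have hC : T.out p [C] = [C] := hρ.out_head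
      have hAC : T.out p [A, C] = [C] := by
        rw [out_cons, hC]
        exact congrArg (· ++ [C]) hA
      exact (hcons.2.2 p A C hAC hC).append_right (hAC.trans hC.symm)
        (by rw [hAC]; exact List.cons_ne_nil _ _)
  · exact (hcons.2.1 _ A hA).append_right (hnfc.out_out_singleton _ A).symm hA

theorem tApprox_out (hnfc : T.IsNFC) (hcons : ConsistentWith T G τ) (α : List V) :
    TApprox G τ T T.q0 α (T.out T.q0 α) := by
  induction α with
  | nil => exact TApprox.refl _
  | cons A α ih =>
    have hrun := hnfc.run_out T.q0 α
    have htail : TApprox G τ T T.q0 (A :: α) (A :: T.out T.q0 α) :=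
      ih.append_left [A] (congrArg Prod.snd hrun).symm (congrArg Prod.fst hrun).symm
    refine htail.trans ?_
    rw [out_cons, ← hrun]
    exact tApprox_cons_of_nf hnfc hcons A (hnfc.nf_out T.q0 α)

theorem tApprox_of_out_eq (hnfc : T.IsNFC) (hcons : ConsistentWith T G τ) {α β : List V}
    (h : T.out T.q0 α = T.out T.q0 β) : TApprox G τ T T.q0 α β :=
  (hcons.tApprox_out hnfc α).trans (h ▸ (hcons.tApprox_out hnfc β).symm)

theorem match_step (hnfc : T.IsNFC) (hcons : ConsistentWith T G τ) {α β : List V}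
    (hαβ : T.out T.q0 α = T.out T.q0 β) {a : Act} {α' : List V} (h : G.tr α a α') :
    (a = τ ∧ T.out T.q0 α' = T.out T.q0 β) ∨
    ∃ βk β', TauSeq G.tr τ (fun u v => T.out T.q0 u = T.out T.q0 v) α β βk ∧
      G.tr βk a β' ∧ T.out T.q0 α' = T.out T.q0 β' := by
  rcases (hcons.tApprox_of_out_eq hnfc hαβ a _).1 (Or.inr ⟨α, α', .refl α, h, rfl⟩) with
    ⟨ha, hα'⟩ | ⟨βk, β', hseq, htr, hα'⟩
  · exact Or.inl ⟨ha, hα'⟩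
  · exact Or.inr ⟨βk, β', hseq.tauSeq hαβ.symm, htr, hα'⟩

end ConsistentWith

/-- Lemma 4.2(2): if an nfc-transducer is consistent with a BPA
system `G`, then `≡^T` is a branching bisimulation in `L_G`; consequently
`T(α) = T(β)` implies `α ~ β` in `L_G`. -/
theorem consistent_nfc_transducer_gives_branching_bisim {Q V Act : Type}
    (G : BPA V Act) (τ : Act) (T : Transducer Q V)
    (hnfc : T.IsNFC) (hcons : ConsistentWith T G τ) :
    IsBranchingBisim G.tr τ (fun α β => T.out T.q0 α = T.out T.q0 β) ∧
    (∀ α β : List V, T.out T.q0 α = T.out T.q0 β → BBisim G.tr τ α β) := by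
  have hbisim : IsBranchingBisim G.tr τ (fun α β => T.out T.q0 α = T.out T.q0 β) :=
    isBranchingBisim_of_symm (fun _ _ h => h.symm)
      fun _ _ hαβ _ _ h => hcons.match_step hnfc hαβ h
  exact ⟨hbisim, fun _ _ h => ⟨_, hbisim, h⟩⟩
end

section
/- (Proposition 4.3(2)) For any normed BPA system G = (V, Act, R) and all α, γ ∈ V*: αγ ~ γ in L_G if and only if α ∈ (R_γ)*, where R_γ = {X ∈ V | Xγ ~ γ}. -/
/-! The class-change norm `ccNorm` (the least number of class-changing transitions on a
path to a silent state) is invariant under `~` and, in a normed system, can only grow when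
a prefix is added: `ccNorm σ ≤ ccNorm (δ ++ σ)`. So if `Hαγ ~ γ`, the three values
`ccNorm γ ≤ ccNorm (αγ) ≤ ccNorm (Hαγ)` coincide, and an optimal path from `Hαγ` must reach
`αγ` without changing class; hence `Hαγ ~ αγ ~ γ`. Peeling off variables one at a time and
using that `~` is a congruence for prefixing gives both directions. -/

section LTS

variable {S Act : Type} {tr : S → Act → S → Prop} {τ : Act}

def IsBranchingSim (tr : S → Act → S → Prop) (τ : Act) (B : S → S → Prop) : Prop :=
  ∀ s t, B s t → ∀ a s', tr s a s' →
    (a = τ ∧ B s' t) ∨ ∃ tk t', TauSeq tr τ B s t tk ∧ tr tk a t' ∧ B s' t'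

theorem isBranchingBisim_iff {B : S → S → Prop} :
    IsBranchingBisim tr τ B ↔ IsBranchingSim tr τ B ∧ IsBranchingSim tr τ (flip B) :=
  ⟨fun h => ⟨fun s t hst => (h s t hst).1, fun t s hst => (h s t hst).2⟩,
    fun h s t hst => ⟨h.1 s t hst, h.2 t s hst⟩⟩

namespace TauSeq

variable {B : S → S → Prop} {s t u v : S}

theorem mono_s11 {B' : S → S → Prop} (hB : ∀ x y, B x y → B' x y)
    (h : TauSeq tr τ B s t u) : TauSeq tr τ B' s t u := by
  induction h with
  | refl t => exact .refl t
  | step htr hrel _ ih => exact .step htr (hB _ _ hrel) ih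

theorem trans (h₁ : TauSeq tr τ B s t u) (h₂ : TauSeq tr τ B s u v) :
    TauSeq tr τ B s t v := by
  induction h₁ with
  | refl => exact h₂
  | step htr hrel _ ih => exact .step htr hrel (ih h₂)

theorem eq_or_exists_snoc (h : TauSeq tr τ B s t u) :
    u = t ∨ ∃ j, TauSeq tr τ B s t j ∧ tr j τ u ∧ B s u := by
  induction h with
  | refl => exact .inl rfl
  | @step t t' t'' htr hrel _ ih =>
    rcases ih with rfl | ⟨j, hj, hju, hu⟩
    · exact .inr ⟨t, .refl t, htr, hrel⟩
    · exact .inr ⟨j, .step htr hrel hj, hju, hu⟩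

theorem rel_last (h : TauSeq tr τ B s t u) (hst : B s t) : B s u := by
  induction h with
  | refl => exact hst
  | step _ hrel _ ih => exact ih hrel

theorem comp_left {B₁ : S → S → Prop} (h : TauSeq tr τ B t u v) (hst : B₁ s t) :
    TauSeq tr τ (Relation.Comp B₁ B) s u v := by
  induction h with
  | refl => exact .refl _
  | step htr hrel _ ih => exact .step htr ⟨t, hst, hrel⟩ ih

theorem exists_steps (h : TauSeq tr τ B s t u) : ∃ w, Steps tr t w u := by
  induction h with
  | refl t => exact ⟨[], .refl t⟩
  | step htr _ _ ih =>
    obtain ⟨w, hw⟩ := ih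
    exact ⟨τ :: w, .step htr hw⟩

end TauSeq

namespace IsBranchingSim

variable {B₁ B₂ : S → S → Prop}

/-- Each step of the path is either absorbed by `B₂` or simulated by a `τ`-path from the
current partner. -/
theorem exists_tauSeq_comp (hB₂ : IsBranchingSim tr τ B₂) {s t tk : S}
    (hseq : TauSeq tr τ B₁ s t tk) (u : S) (hst : B₁ s t) (htu : B₂ t u) :
    ∃ uk, TauSeq tr τ (Relation.Comp B₁ B₂) s u uk ∧ B₂ tk uk := by
  induction hseq generalizing u with
  | refl t => exact ⟨u, .refl u, htu⟩
  | @step t t₁ tk htr hst₁ _ ih =>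
    rcases hB₂ t u htu τ t₁ htr with ⟨-, ht₁u⟩ | ⟨uj, u', hu, huj, ht₁u'⟩
    · exact ih u hst₁ ht₁u
    · obtain ⟨uk, hu', hk⟩ := ih u' hst₁ ht₁u'
      exact ⟨uk, (hu.comp_left hst).trans (.step huj ⟨t₁, hst₁, ht₁u'⟩ hu'), hk⟩

theorem comp (hB₁ : IsBranchingSim tr τ B₁) (hB₂ : IsBranchingSim tr τ B₂) :
    IsBranchingSim tr τ (Relation.Comp B₁ B₂) := by
  rintro s u ⟨t, hst, htu⟩ a s' hss'
  rcases hB₁ s t hst a s' hss' with ⟨ha, hs't⟩ | ⟨tk, t', ht, htk, hs't'⟩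
  · exact .inl ⟨ha, t, hs't, htu⟩
  obtain ⟨uk, hu, htkuk⟩ := hB₂.exists_tauSeq_comp ht u hst htu
  rcases hB₂ tk uk htkuk a t' htk with ⟨ha, ht'uk⟩ | ⟨uk', u', hu', huk', ht'u'⟩
  · -- `B₂` absorbs the final `τ`-step, so the last step of the matching path (if any) plays
    -- its role
    rcases hu.eq_or_exists_snoc with rfl | ⟨uj, hu₀, huj, -⟩
    · exact .inl ⟨ha, t', hs't', ht'uk⟩
    · exact .inr ⟨uj, uk, hu₀, ha ▸ huj, t', hs't', ht'uk⟩
  · refine .inr ⟨uk', u', ?_, huk', t', hs't', ht'u'⟩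
    exact hu.trans (hu'.comp_left (ht.rel_last hst))

end IsBranchingSim

namespace BBisim

variable {s t u : S}

theorem refl (s : S) : BBisim tr τ s s := by
  refine ⟨Eq, fun s t hst => ?_, rfl⟩
  subst hst
  exact ⟨fun a s' h => .inr ⟨s, s', .refl s, h, rfl⟩,
    fun a t' h => .inr ⟨s, t', .refl s, h, rfl⟩⟩

theorem symm (h : BBisim tr τ s t) : BBisim tr τ t s := by
  obtain ⟨B, hB, hst⟩ := h
  exact ⟨flip B, isBranchingBisim_iff.2 (isBranchingBisim_iff.1 hB).symm, hst⟩

theorem trans (h₁ : BBisim tr τ s t) (h₂ : BBisim tr τ t u) : BBisim tr τ s u := by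
  obtain ⟨B₁, hB₁, hst⟩ := h₁
  obtain ⟨B₂, hB₂, htu⟩ := h₂
  rw [isBranchingBisim_iff] at hB₁ hB₂
  refine ⟨Relation.Comp B₁ B₂, isBranchingBisim_iff.2 ⟨hB₁.1.comp hB₂.1, ?_⟩, t, hst, htu⟩
  rw [Relation.flip_comp]
  exact hB₂.2.comp hB₁.2

end BBisim

namespace Steps

theorem append {s t u : S} {w w' : List Act} (h₁ : Steps tr s w t)
    (h₂ : Steps tr t w' u) : Steps tr s (w ++ w') u := by
  induction h₁ with
  | refl => exact h₂
  | step htr _ ih => exact .step htr (ih h₂)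

theorem exists_ccPath {s u : S} {w : List Act} (h : Steps tr s w u) :
    ∃ ℓ, CCPath tr τ s ℓ u := by
  induction h with
  | refl s => exact ⟨0, .refl s⟩
  | @step s a s' w t htr _ ih =>
    obtain ⟨ℓ, hℓ⟩ := ih
    by_cases hss' : BBisim tr τ s s'
    · exact ⟨ℓ, .stepEq htr hss' hℓ⟩
    · exact ⟨ℓ + 1, .stepNe htr hss' hℓ⟩

end Steps

namespace SilentState

variable {s t : S}

theorem step {s' : S} {a : Act} (hs : SilentState tr τ s) (h : tr s a s') :
    a = τ ∧ SilentState tr τ s' :=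
  ⟨hs [a] s' (.step h (.refl s')) a (List.mem_singleton_self a),
    fun w u hw b hb => hs (a :: w) u (.step h hw) b (List.mem_cons_of_mem a hb)⟩

theorem of_steps {w : List Act} (hs : SilentState tr τ s) (hw : Steps tr s w t) :
    SilentState tr τ t := by
  induction hw with
  | refl => exact hs
  | step h _ ih => exact ih (hs.step h).2

theorem bbisim (hs : SilentState tr τ s) (ht : SilentState tr τ t) : BBisim tr τ s t := by
  refine ⟨fun x y => SilentState tr τ x ∧ SilentState tr τ y, fun x y ⟨hx, hy⟩ => ⟨?_, ?_⟩,
    hs, ht⟩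
  · intro a x' h
    obtain ⟨ha, hx'⟩ := hx.step h
    exact .inl ⟨ha, hx', hy⟩
  · intro a y' h
    obtain ⟨ha, hy'⟩ := hy.step h
    exact .inl ⟨ha, hx, hy'⟩

theorem ccPath_zero_of_steps {w : List Act} (hs : SilentState tr τ s) (hw : Steps tr s w t) :
    CCPath tr τ s 0 t := by
  induction hw with
  | refl s => exact .refl s
  | step h _ ih =>
    have hs' := (hs.step h).2
    exact .stepEq h (hs.bbisim hs') (ih hs')

end SilentState

/-- Silence is invariant under `~`: matching a visible step of `t` would need one of `s`. -/
theorem BBisim.silentState {s t : S} (h : BBisim tr τ s t) (hs : SilentState tr τ s) :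
    SilentState tr τ t := by
  obtain ⟨B, hB, hst⟩ := h
  intro w t' hw
  induction hw generalizing s with
  | refl => simp
  | @step t a t₁ w t' htr _ ih =>
    rcases (hB s t hst).2 a t₁ htr with ⟨ha, hst₁⟩ | ⟨sk, s', hsk, hsks', hs't₁⟩
    · simpa [ha] using ih hs hst₁
    · obtain ⟨w₀, hw₀⟩ := hsk.exists_steps
      obtain ⟨ha, hs'⟩ := (hs.of_steps hw₀).step hsks'
      simpa [ha] using ih hs' hs't₁

namespace CCPath

variable {s u v : S} {m n : ℕ}

theorem bbisim_of_zero (h : CCPath tr τ s 0 u) : BBisim tr τ s u := by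
  generalize hn : 0 = n at h
  induction h with
  | refl => exact .refl _
  | stepEq _ hss' _ ih => exact hss'.trans (ih hn)
  | stepNe => omega

theorem trans (h₁ : CCPath tr τ s m u) (h₂ : CCPath tr τ u n v) :
    CCPath tr τ s (m + n) v := by
  induction h₁ with
  | refl => simpa using h₂
  | stepEq h hss' _ ih => exact .stepEq h hss' (ih h₂)
  | stepNe h hss' _ ih => exact (Nat.add_right_comm .. ▸ .stepNe h hss' (ih h₂))

end CCPath

theorem TauSeq.ccPath_zero {B : S → S → Prop} {s t tk : S} (hB : IsBranchingBisim tr τ B)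
    (h : TauSeq tr τ B s t tk) (hst : B s t) : CCPath tr τ t 0 tk := by
  induction h with
  | refl t => exact .refl t
  | step htr hst₁ _ ih =>
    exact .stepEq htr ((BBisim.symm ⟨B, hB, hst⟩).trans ⟨B, hB, hst₁⟩) (ih hst₁)

/-- Class-preserving steps of `s` are absorbed, and a class-changing one is matched by a
`τ`-path inside `t`'s class followed by at most one class-changing step. -/
theorem CCPath.exists_le_of_bbisim {s u : S} {ℓ : ℕ} (h : CCPath tr τ s ℓ u)
    (hu : SilentState tr τ u) {t : S} (hst : BBisim tr τ s t) :
    ∃ m ≤ ℓ, ∃ u', CCPath tr τ t m u' ∧ SilentState tr τ u' := by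
  induction h generalizing t with
  | refl s => exact ⟨0, le_rfl, t, .refl t, hst.silentState hu⟩
  | stepEq _ hss' _ ih => exact ih hu (hss'.symm.trans hst)
  | @stepNe s a s' n v htr hss' _ ih =>
    obtain ⟨B, hB, hBst⟩ := hst
    rcases (hB s t hBst).1 a s' htr with ⟨-, hs't⟩ | ⟨tk, t', htk, htkt', hs't'⟩
    · exact absurd ((BBisim.trans ⟨B, hB, hBst⟩ (BBisim.symm ⟨B, hB, hs't⟩))) hss'
    obtain ⟨m, hm, u', ht'u', hu'⟩ := ih hu ⟨B, hB, hs't'⟩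
    have htk0 : CCPath tr τ t 0 tk := htk.ccPath_zero hB hBst
    by_cases hc : BBisim tr τ tk t'
    · exact ⟨0 + m, by omega, u', htk0.trans (.stepEq htkt' hc ht'u'), hu'⟩
    · exact ⟨0 + (m + 1), by omega, u', htk0.trans (.stepNe htkt' hc ht'u'), hu'⟩

theorem ccNorm_le {s u : S} {ℓ : ℕ} (h : CCPath tr τ s ℓ u) (hu : SilentState tr τ u) :
    ccNorm tr τ s ≤ ℓ :=
  sInf_le ⟨ℓ, rfl, u, h, hu⟩

theorem ccNorm_le_of_bbisim {s t : S} (h : BBisim tr τ s t) :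
    ccNorm tr τ t ≤ ccNorm tr τ s := by
  refine le_sInf ?_
  rintro _ ⟨ℓ, rfl, u, hsu, hu⟩
  obtain ⟨m, hm, u', htu', hu'⟩ := hsu.exists_le_of_bbisim hu h
  exact (ccNorm_le htu' hu').trans (Nat.cast_le.2 hm)

theorem BBisim.ccNorm_eq {s t : S} (h : BBisim tr τ s t) : ccNorm tr τ s = ccNorm tr τ t :=
  le_antisymm (ccNorm_le_of_bbisim h.symm) (ccNorm_le_of_bbisim h)

theorem exists_ccPath_ccNorm_eq {s : S} (hs : ∃ ℓ u, CCPath tr τ s ℓ u ∧ SilentState tr τ u) :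
    ∃ ℓ u, CCPath tr τ s ℓ u ∧ SilentState tr τ u ∧ ccNorm tr τ s = ℓ := by
  obtain ⟨u, hsu, hu⟩ := Nat.sInf_mem hs
  refine ⟨_, u, hsu, hu, le_antisymm (ccNorm_le hsu hu) (le_sInf ?_)⟩
  rintro _ ⟨ℓ, rfl, u', hsu', hu'⟩
  exact Nat.cast_le.2 (Nat.sInf_le ⟨u', hsu', hu'⟩)

end LTS

namespace BPA

variable {V Act : Type} {G : BPA V Act} {τ : Act}

theorem tr_cons {A : V} {β s' : List V} {a : Act} (h : G.tr (A :: β) a s') :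
    ∃ ρ, (A, a, ρ) ∈ G.rules ∧ s' = ρ ++ β := by
  obtain ⟨A', ρ, β', hr, hs, rfl⟩ := h
  obtain ⟨rfl, rfl⟩ := List.cons.inj hs
  exact ⟨ρ, hr, rfl⟩

theorem tr_append_right {s t : List V} {a : Act} (h : G.tr s a t) (ρ : List V) :
    G.tr (s ++ ρ) a (t ++ ρ) := by
  obtain ⟨A, γ, β, hr, rfl, rfl⟩ := h
  exact ⟨A, γ, β ++ ρ, hr, rfl, List.append_assoc ..⟩

theorem steps_append_right {s t : List V} {w : List Act} (h : Steps G.tr s w t) (ρ : List V) :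
    Steps G.tr (s ++ ρ) w (t ++ ρ) := by
  induction h with
  | refl => exact .refl _
  | step htr _ ih => exact .step (tr_append_right htr ρ) ih

theorem silentState_nil : SilentState G.tr τ [] := by
  rintro _ _ (_ | ⟨⟨_, _, _, _, h, _⟩, _⟩)
  · simp
  · simp at h

theorem Normed.exists_steps_nil (hG : G.Normed) (ζ : List V) : ∃ w, Steps G.tr ζ w [] := by
  induction ζ with
  | nil => exact ⟨[], .refl []⟩
  | cons A ζ ih =>
    have hA : {n : ℕ∞ | ∃ w : List Act, n = w.length ∧ Steps G.tr [A] w []}.Nonempty :=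
      Set.nonempty_iff_ne_empty.2 fun h => hG A (by rw [BPA.norm, h, sInf_empty])
    obtain ⟨_, w₁, -, hw₁⟩ := hA
    obtain ⟨w₂, hw₂⟩ := ih
    exact ⟨w₁ ++ w₂, (steps_append_right hw₁ ζ).append hw₂⟩

theorem Normed.exists_ccPath_silentState (hG : G.Normed) (s : List V) :
    ∃ ℓ u, CCPath G.tr τ s ℓ u ∧ SilentState G.tr τ u := by
  obtain ⟨w, hw⟩ := hG.exists_steps_nil s
  obtain ⟨ℓ, hℓ⟩ := hw.exists_ccPath (τ := τ)
  exact ⟨ℓ, [], hℓ, silentState_nil⟩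

/-- A path from `δσ` to a silent state passes through `σ`, after as many class changes: if
it never pops `δ`, it ends in a silent `ζσ`, from which `σ` is reached silently. -/
theorem Normed.ccPath_split (hG : G.Normed) {δ σ u : List V} {ℓ : ℕ}
    (h : CCPath G.tr τ (δ ++ σ) ℓ u) (hu : SilentState G.tr τ u) :
    ∃ k₁ k₂ u', k₁ + k₂ = ℓ ∧ CCPath G.tr τ (δ ++ σ) k₁ σ ∧ CCPath G.tr τ σ k₂ u' ∧
      SilentState G.tr τ u' := by
  generalize hs : δ ++ σ = s at h ⊢
  induction h generalizing δ with
  | refl s =>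
    obtain ⟨w, hw⟩ := hG.exists_steps_nil δ
    have hσ : Steps G.tr s w σ := hs ▸ steps_append_right hw σ
    exact ⟨0, 0, σ, rfl, hu.ccPath_zero_of_steps hσ, .refl σ, hu.of_steps hσ⟩
  | @stepEq s a s' n t htr hss' hs't ih =>
    cases δ with
    | nil =>
      obtain rfl : σ = s := hs
      exact ⟨0, n, t, by omega, .refl _, .stepEq htr hss' hs't, hu⟩
    | cons A δ =>
      subst hs
      obtain ⟨ρ, -, rfl⟩ := tr_cons htr
      obtain ⟨k₁, k₂, u', hk, h₁, h₂⟩ := ih hu (List.append_assoc ..)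
      exact ⟨k₁, k₂, u', hk, .stepEq htr hss' h₁, h₂⟩
  | @stepNe s a s' n t htr hss' hs't ih =>
    cases δ with
    | nil =>
      obtain rfl : σ = s := hs
      exact ⟨0, n + 1, t, by omega, .refl _, .stepNe htr hss' hs't, hu⟩
    | cons A δ =>
      subst hs
      obtain ⟨ρ, -, rfl⟩ := tr_cons htr
      obtain ⟨k₁, k₂, u', hk, h₁, h₂⟩ := ih hu (List.append_assoc ..)
      exact ⟨k₁ + 1, k₂, u', by omega, .stepNe htr hss' h₁, h₂⟩

theorem Normed.ccNorm_le_append (hG : G.Normed) (δ σ : List V) :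
    ccNorm G.tr τ σ ≤ ccNorm G.tr τ (δ ++ σ) := by
  refine le_sInf ?_
  rintro _ ⟨ℓ, rfl, u, h, hu⟩
  obtain ⟨k₁, k₂, u', hk, -, h₂, hu'⟩ := hG.ccPath_split (δ := δ) h hu
  exact (ccNorm_le h₂ hu').trans (Nat.cast_le.2 (by omega))

def prefixClosure (B : List V → List V → Prop) (x y : List V) : Prop :=
  ∃ η ζ ζ', B ζ ζ' ∧ x = η ++ ζ ∧ y = η ++ ζ'

theorem flip_prefixClosure (B : List V → List V → Prop) :
    flip (prefixClosure B) = prefixClosure (flip B) := by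
  funext x y
  exact propext ⟨fun ⟨η, ζ, ζ', h, hy, hx⟩ => ⟨η, ζ', ζ, h, hx, hy⟩,
    fun ⟨η, ζ, ζ', h, hx, hy⟩ => ⟨η, ζ', ζ, h, hy, hx⟩⟩

/-- A step of `ηζ` either moves inside `ζ` (when `η = []`) or rewrites the head of `η`, which
`ηζ'` can copy. -/
theorem isBranchingSim_prefixClosure {B : List V → List V → Prop}
    (hB : IsBranchingSim G.tr τ B) : IsBranchingSim G.tr τ (prefixClosure B) := by
  rintro _ _ ⟨η, ζ, ζ', hζ, rfl, rfl⟩ a x' htr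
  cases η with
  | nil =>
    have lift : ∀ x y, B x y → prefixClosure B x y := fun x y h => ⟨[], x, y, h, rfl, rfl⟩
    rcases hB ζ ζ' hζ a x' htr with ⟨ha, hx'⟩ | ⟨tk, t', hseq, htk, ht'⟩
    · exact .inl ⟨ha, lift _ _ hx'⟩
    · exact .inr ⟨tk, t', hseq.mono_s11 lift, htk, lift _ _ ht'⟩
  | cons A η =>
    obtain ⟨ρ, hr, rfl⟩ := tr_cons htr
    exact .inr ⟨_, ρ ++ η ++ ζ', .refl _, ⟨A, ρ, η ++ ζ', hr, rfl, List.append_assoc ..⟩,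
      ρ ++ η, ζ, ζ', hζ, (List.append_assoc ..).symm, rfl⟩

theorem bbisim_append_left (η : List V) {δ δ' : List V} (h : BBisim G.tr τ δ δ') :
    BBisim G.tr τ (η ++ δ) (η ++ δ') := by
  obtain ⟨B, hB, hδ⟩ := h
  rw [isBranchingBisim_iff] at hB
  refine ⟨prefixClosure B, isBranchingBisim_iff.2 ⟨isBranchingSim_prefixClosure hB.1, ?_⟩,
    η, δ, δ', hδ, rfl, rfl⟩
  rw [flip_prefixClosure]
  exact isBranchingSim_prefixClosure hB.2

theorem Normed.bbisim_of_cons_append_bbisim (hG : G.Normed) {H : V} {α γ : List V}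
    (h : BBisim G.tr τ (H :: (α ++ γ)) γ) : BBisim G.tr τ (α ++ γ) γ := by
  obtain ⟨ℓ, u, hp, hu, hℓ⟩ :=
    exists_ccPath_ccNorm_eq (hG.exists_ccPath_silentState (τ := τ) (H :: (α ++ γ)))
  obtain ⟨k₁, k₂, u', rfl, h₁, h₂, hu'⟩ := hG.ccPath_split (δ := [H]) hp hu
  have hk : ((k₁ + k₂ : ℕ) : ℕ∞) ≤ k₂ :=
    calc ((k₁ + k₂ : ℕ) : ℕ∞) = ccNorm G.tr τ (H :: (α ++ γ)) := hℓ.symm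
      _ = ccNorm G.tr τ γ := h.ccNorm_eq
      _ ≤ ccNorm G.tr τ (α ++ γ) := hG.ccNorm_le_append α γ
      _ ≤ k₂ := ccNorm_le h₂ hu'
  obtain rfl : k₁ = 0 := by have := Nat.cast_le.1 hk; omega
  exact h₁.bbisim_of_zero.symm.trans h

theorem Normed.cons_append_bbisim_iff (hG : G.Normed) {H : V} {α γ : List V} :
    BBisim G.tr τ (H :: (α ++ γ)) γ ↔
      BBisim G.tr τ (H :: γ) γ ∧ BBisim G.tr τ (α ++ γ) γ := by
  refine ⟨fun h => ?_, fun ⟨hH, hα⟩ => (bbisim_append_left [H] hα).trans hH⟩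
  have hα := hG.bbisim_of_cons_append_bbisim h
  exact ⟨(bbisim_append_left [H] hα).symm.trans h, hα⟩

end BPA

/-- Proposition 4.3(2): `αγ ~ γ` iff `α ∈ (R_γ)*`. -/
theorem bbisim_append_iff_redundant {V Act : Type} (G : BPA V Act) (τ : Act)
    (hG : G.Normed) (α γ : List V) :
    BBisim G.tr τ (α ++ γ) γ ↔ ∀ X ∈ α, X ∈ RedSet G τ γ := by
  induction α with
  | nil => simpa using BBisim.refl γ
  | cons H α ih =>
    rw [List.cons_append, hG.cons_append_bbisim_iff, ih, List.forall_mem_cons]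
    rfl
end
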